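/- Let \alpha_n : \mathbb{P}^r \to \mathbb{P}^s be the n-th Veronese embedding (so s+1 = \binom{r+n}{n}). At an archimedean place, the Weil metric \varphi on \mathcal{O}(1) over \mathbb{P}^r and the n-th root of the pullback under \alpha_n of the Fubini-Study metric \psi on \mathcal{O}(1) over \mathbb{P}^s satisfy: for every point z = [z_0:\cdots:z_r], the quantity |\log(\max_i |z_i|) - \frac{1}{2n}\log(\sum_{|I|=n} |z^I|^2)| is at most \frac{r \log n}{n}, for all n \ge r+1, where the sum runs over all monomials z^I of degree n in z_0,\dots,z_r. -/
import Mathlib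


/-- Comparison, at an archimedean place, between the Weil metric on `O(1)` over `ℙ^r` and the
`n`-th root of the pullback along the `n`-th Veronese embedding of the Fubini-Study metric:
at a point `[z_0 : ... : z_r]` the logarithmic distance of the two metrics is
`|log (max_i |z_i|) - (1/(2n)) log (∑_{|I|=n} |z^I|^2)|`, and it is bounded by `r log n / n`
for `n ≥ r + 1`. -/
theorem stmt12 (r n : ℕ) (hn : r + 1 ≤ n) (z : Fin (r + 1) → ℂ) (hz : z ≠ 0) :
    |Real.log (⨆ i, ‖z i‖) -
        (1 / (2 * (n : ℝ))) *
          Real.log (∑ I ∈ Finset.univ.filter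
              (fun I : Fin (r + 1) → Fin (n + 1) => ∑ i, (I i : ℕ) = n),
            ∏ i, ‖z i‖ ^ (2 * (I i : ℕ)))| ≤ r * Real.log n / n := by
  set M : ℝ := ⨆ i, ‖z i‖ with hM
  have hfin : ∀ i, ‖z i‖ ≤ M := fun i =>
    le_ciSup (f := fun i => ‖z i‖) (Set.Finite.bddAbove (Set.finite_range _)) i
  obtain ⟨i₀, hi₀⟩ : ∃ i, ‖z i‖ = M := by
    obtain ⟨i, hi⟩ := exists_eq_ciSup_of_finite (f := fun i => ‖z i‖)
    exact ⟨i, hi⟩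
  have hMpos : 0 < M := by
    obtain ⟨j, hj⟩ := Function.ne_iff.mp hz
    exact lt_of_lt_of_le (norm_pos_iff.mpr hj) (hfin j)
  have hn1 : 1 ≤ n := le_trans (Nat.le_add_left 1 r) hn
  have hnR : (0:ℝ) < n := by exact_mod_cast hn1
  have hlogn : 0 ≤ Real.log n := Real.log_nonneg (by exact_mod_cast hn1)
  set T := Finset.univ.filter
      (fun I : Fin (r + 1) → Fin (n + 1) => ∑ i, (I i : ℕ) = n) with hT
  set S : ℝ := ∑ I ∈ T, ∏ i, ‖z i‖ ^ (2 * (I i : ℕ)) with hS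
  have hnlt : n < n + 1 := Nat.lt_succ_self n
  -- lower bound on S
  set I₀ : Fin (r + 1) → Fin (n + 1) := fun i => if i = i₀ then ⟨n, hnlt⟩ else 0 with hI₀
  have hmem : I₀ ∈ T := by
    simp only [hT, Finset.mem_filter, Finset.mem_univ, true_and, hI₀]
    simp [apply_ite (Fin.val), Finset.sum_ite_eq']
  have hterm : (∏ i, ‖z i‖ ^ (2 * ((I₀ i : ℕ)))) = M ^ (2*n) := by
    rw [Finset.prod_eq_single i₀]
    · simp [hI₀, hi₀]
    · intro b _ hb
      simp [hI₀, hb]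
    · simp
  have hlow : M ^ (2*n) ≤ S := by
    rw [← hterm]
    exact Finset.single_le_sum (f := fun I : Fin (r+1) → Fin (n+1) => ∏ i, ‖z i‖ ^ (2*(I i:ℕ))) (fun I _ => Finset.prod_nonneg fun i _ => by positivity) hmem
  -- each term bounded
  have hub : ∀ I ∈ T, (∏ i, ‖z i‖ ^ (2 * (I i : ℕ))) ≤ M ^ (2*n) := by
    intro I hI
    simp only [hT, Finset.mem_filter] at hI
    calc (∏ i, ‖z i‖ ^ (2 * (I i : ℕ))) ≤ ∏ i, M ^ (2 * (I i : ℕ)) :=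
          Finset.prod_le_prod (fun i _ => by positivity)
            (fun i _ => pow_le_pow_left₀ (norm_nonneg _) (hfin i) _)
      _ = M ^ (∑ i, 2 * (I i : ℕ)) := by rw [Finset.prod_pow_eq_pow_sum]
      _ = M ^ (2*n) := by rw [← Finset.mul_sum, hI.2]
  -- card bound
  have hcard : T.card ≤ (n+1)^r := by
    have := Finset.card_le_card_of_injOn (s := T)
      (f := fun (I : Fin (r+1) → Fin (n+1)) => fun j : Fin r => I j.castSucc)
      (t := (Finset.univ : Finset (Fin r → Fin (n+1))))
      (fun _ _ => Finset.mem_univ _) ?_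
    · simpa using this
    · intro I hI J hJ h
      simp only [hT, Finset.coe_filter, Set.mem_setOf_eq] at hI hJ
      funext i
      refine Fin.lastCases ?_ ?_ i
      · have h1 : (∑ j : Fin r, (I j.castSucc : ℕ)) + (I (Fin.last r) : ℕ) = n := by
          rw [← Fin.sum_univ_castSucc (f := fun i => (I i : ℕ))]; exact hI.2
        have h2 : (∑ j : Fin r, (J j.castSucc : ℕ)) + (J (Fin.last r) : ℕ) = n := by
          rw [← Fin.sum_univ_castSucc (f := fun i => (J i : ℕ))]; exact hJ.2
        have hsum : (∑ j : Fin r, (I j.castSucc : ℕ)) = ∑ j : Fin r, (J j.castSucc : ℕ) :=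
          Finset.sum_congr rfl fun j _ => congrArg Fin.val (congrFun h j)
        exact Fin.ext (by omega)
      · intro j
        exact congrFun h j
  have hcard2 : T.card ≤ n ^ (2*r) := by
    refine hcard.trans ?_
    rcases Nat.eq_zero_or_pos r with hr | hr
    · subst hr; simp
    · have h2 : 2 ≤ n := by omega
      calc (n+1)^r ≤ (n^2)^r := Nat.pow_le_pow_left (by nlinarith) r
        _ = n^(2*r) := by rw [← pow_mul, mul_comm]
  have hupp : S ≤ (n:ℝ)^(2*r) * M^(2*n) := by
    calc S ≤ T.card • (M^(2*n)) := Finset.sum_le_card_nsmul _ _ _ hub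
      _ = (T.card : ℝ) * M^(2*n) := by rw [nsmul_eq_mul]
      _ ≤ (n:ℝ)^(2*r) * M^(2*n) := by
          apply mul_le_mul_of_nonneg_right _ (by positivity)
          exact_mod_cast Nat.cast_le.mpr hcard2 |>.trans_eq (by push_cast; ring)
  have hSpos : 0 < S := lt_of_lt_of_le (pow_pos hMpos _) hlow
  have h1 : 2*(n:ℝ)*Real.log M ≤ Real.log S := by
    have := Real.log_le_log (pow_pos hMpos (2*n)) hlow
    rwa [Real.log_pow, Nat.cast_mul, Nat.cast_ofNat] at this
  have h2 : Real.log S ≤ 2*(r:ℝ)*Real.log n + 2*(n:ℝ)*Real.log M := by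
    have := Real.log_le_log hSpos hupp
    rw [Real.log_mul (by positivity) (by positivity), Real.log_pow, Real.log_pow] at this
    push_cast at this
    linarith
  have hfac : (0:ℝ) < 1/(2*(n:ℝ)) := by positivity
  rw [abs_le]
  constructor
  · have := mul_le_mul_of_nonneg_left h2 hfac.le
    have he : (1/(2*(n:ℝ))) * (2*(r:ℝ)*Real.log n + 2*(n:ℝ)*Real.log M)
        = r*Real.log n / n + Real.log M := by field_simp
    linarith [he ▸ this]
  · have := mul_le_mul_of_nonneg_left h1 hfac.le
    have he : (1/(2*(n:ℝ))) * (2*(n:ℝ)*Real.log M) = Real.log M := by field_simp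
    have hnn : 0 ≤ (r:ℝ)*Real.log n / n := by positivity
    linarith [he ▸ this]
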